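/- arXiv:math/0610109 — 5 statements merged into one kernel-verified Lean document; each statement's English description precedes it below -/
import Mathlib

section
/- The class of twice differentiable functions satisfying the strict Laguerre inequality f'^2 - f f'' > 0 on an interval is closed under pointwise multiplication: if L(f) > 0 and L(g) > 0 on the interval and f, g are not both zero at any point, then L(f·g) > 0 there. -/
/-! The Laguerre expression of a product splits as `L(f g) = g² L(f) + f² L(g)`: both terms are
nonnegative, and the one whose square factor is nonzero is strictly positive. -/

theorem laguerre_mul_eq {R : Type*} [CommRing R] (a a' a'' b b' b'' : R) :
    (a' * b + a * b') ^ 2 - (a * b) * (a'' * b + 2 * a' * b' + a * b'') =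
      b ^ 2 * (a' ^ 2 - a * a'') + a ^ 2 * (b' ^ 2 - b * b'') := by
  ring

theorem laguerre_mul_pos {R : Type*} [CommRing R] [LinearOrder R] [IsStrictOrderedRing R]
    {a a' a'' b b' b'' : R} (ha : a' ^ 2 - a * a'' > 0) (hb : b' ^ 2 - b * b'' > 0)
    (hab : a ≠ 0 ∨ b ≠ 0) :
    (a' * b + a * b') ^ 2 - (a * b) * (a'' * b + 2 * a' * b' + a * b'') > 0 := by
  rw [laguerre_mul_eq]
  rcases hab with ha0 | hb0
  · have : a ^ 2 > 0 := by positivity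
    positivity
  · have : b ^ 2 > 0 := by positivity
    positivity

theorem laguerre_class_closed_under_mul_general
    (I : Set ℝ)
    (f f' f'' g g' g'' : ℝ → ℝ)
    (hLf : ∀ x ∈ I, (f' x) ^ 2 - f x * f'' x > 0)
    (hLg : ∀ x ∈ I, (g' x) ^ 2 - g x * g'' x > 0)
    (hne : ∀ x ∈ I, f x ≠ 0 ∨ g x ≠ 0) :
    ∀ x ∈ I,
      (f' x * g x + f x * g' x) ^ 2 -
        (f x * g x) * (f'' x * g x + 2 * f' x * g' x + f x * g'' x) > 0 :=
  fun x hx => laguerre_mul_pos (hLf x hx) (hLg x hx) (hne x hx)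

theorem laguerre_class_closed_under_mul
    (I : Set ℝ) (hI : IsOpen I)
    (f f' f'' g g' g'' : ℝ → ℝ)
    (hf : ∀ x ∈ I, HasDerivAt f (f' x) x)
    (hf' : ∀ x ∈ I, HasDerivAt f' (f'' x) x)
    (hg : ∀ x ∈ I, HasDerivAt g (g' x) x)
    (hg' : ∀ x ∈ I, HasDerivAt g' (g'' x) x)
    (hLf : ∀ x ∈ I, (f' x) ^ 2 - f x * f'' x > 0)
    (hLg : ∀ x ∈ I, (g' x) ^ 2 - g x * g'' x > 0)
    (hne : ∀ x ∈ I, f x ≠ 0 ∨ g x ≠ 0) :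
    ∀ x ∈ I,
      (f' x * g x + f x * g' x) ^ 2 -
        (f x * g x) * (f'' x * g x + 2 * f' x * g' x + f x * g'' x) > 0 :=
  laguerre_class_closed_under_mul_general I f f' f'' g g' g'' hLf hLg hne
end

section
/- For all real x ≥ 0, Γ(x+1) / Γ(x/2 + 1)^2 < 2^{x + 1/2} / √(π (x + 1/2)). -/
open MeasureTheory Real Set


lemma betaR_integrableOn {a b : ℝ} (ha : 0 < a) (hb : 0 < b) :
    IntegrableOn (fun t : ℝ => t ^ (a - 1) * (1 - t) ^ (b - 1)) (Set.Ioo 0 1) := by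
  have hC : IntervalIntegrable
      (fun x : ℝ => (x : ℂ) ^ ((a : ℂ) - 1) * (1 - (x : ℂ)) ^ ((b : ℂ) - 1)) volume 0 1 :=
    Complex.betaIntegral_convergent (by simpa using ha) (by simpa using hb)
  have hC' : IntegrableOn
      (fun x : ℝ => (x : ℂ) ^ ((a : ℂ) - 1) * (1 - (x : ℂ)) ^ ((b : ℂ) - 1)) (Set.Ioo 0 1) :=
    (intervalIntegrable_iff_integrableOn_Ioo_of_le one_pos.le).mp hC
  refine IntegrableOn.congr_fun (hC'.re) (fun x hx => ?_) measurableSet_Ioo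
  have hx0 : (0:ℝ) < x := hx.1
  have hx1 : x < 1 := hx.2
  have e1 : ((x : ℝ) ^ (a - 1) : ℝ) = ((x:ℂ) ^ ((a:ℂ) - 1)).re := by
    rw [show ((a:ℂ) - 1) = ((a - 1 : ℝ) : ℂ) by push_cast; ring,
      ← Complex.ofReal_cpow hx0.le]
    simp
  have e2 : ((1 - x : ℝ) ^ (b - 1) : ℝ) = ((1 - (x:ℂ)) ^ ((b:ℂ) - 1)).re ∧
      ((1 - (x:ℂ)) ^ ((b:ℂ) - 1)).im = 0 ∧ ((x:ℂ) ^ ((a:ℂ) - 1)).im = 0 := by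
    rw [show ((b:ℂ) - 1) = ((b - 1 : ℝ) : ℂ) by push_cast; ring,
      show (1 - (x:ℂ)) = ((1 - x : ℝ) : ℂ) by push_cast; ring,
      ← Complex.ofReal_cpow (by linarith),
      show ((a:ℂ) - 1) = ((a - 1 : ℝ) : ℂ) by push_cast; ring,
      ← Complex.ofReal_cpow hx0.le]
    simp
  simp only [RCLike.re_to_complex, Complex.mul_re, e1, e2.1, e2.2.1, e2.2.2, mul_zero, sub_zero]

lemma Gamma_mul_Gamma_eq_betaR {a b : ℝ} (ha : 0 < a) (hb : 0 < b) :
    Real.Gamma a * Real.Gamma b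
      = Real.Gamma (a + b) * ∫ t in Set.Ioo (0:ℝ) 1, t ^ (a - 1) * (1 - t) ^ (b - 1) := by
  have hc := Complex.Gamma_mul_Gamma_eq_betaIntegral (s := (a:ℂ)) (t := (b:ℂ))
    (by simpa using ha) (by simpa using hb)
  have hbeta : Complex.betaIntegral a b
      = ((∫ t in Set.Ioo (0:ℝ) 1, t ^ (a - 1) * (1 - t) ^ (b - 1) : ℝ) : ℂ) := by
    rw [Complex.betaIntegral, intervalIntegral.integral_of_le one_pos.le,
      MeasureTheory.integral_Ioc_eq_integral_Ioo]
    rw [show ((∫ t in Set.Ioo (0:ℝ) 1, t ^ (a - 1) * (1 - t) ^ (b - 1) : ℝ) : ℂ)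
        = ∫ t in Set.Ioo (0:ℝ) 1, ((t ^ (a - 1) * (1 - t) ^ (b - 1) : ℝ) : ℂ) from
      (integral_ofReal).symm]
    refine setIntegral_congr_fun measurableSet_Ioo (fun x hx => ?_)
    have hx0 : (0:ℝ) < x := hx.1
    push_cast
    rw [show ((a:ℂ) - 1) = ((a - 1 : ℝ) : ℂ) by push_cast; ring,
      show ((b:ℂ) - 1) = ((b - 1 : ℝ) : ℂ) by push_cast; ring,
      show (1 - (x:ℂ)) = ((1 - x : ℝ) : ℂ) by push_cast; ring,
      ← Complex.ofReal_cpow hx0.le, ← Complex.ofReal_cpow (by linarith [hx.2])]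
  rw [hbeta, Complex.Gamma_ofReal, Complex.Gamma_ofReal, ← Complex.ofReal_add,
    Complex.Gamma_ofReal] at hc
  exact_mod_cast hc

section
variable {a b : ℝ}

lemma betaR_nonneg (a b : ℝ) :
    0 ≤ ∫ t in Set.Ioo (0:ℝ) 1, t ^ (a - 1) * (1 - t) ^ (b - 1) := by
  refine setIntegral_nonneg measurableSet_Ioo (fun x hx => ?_)
  exact mul_nonneg (Real.rpow_nonneg hx.1.le _) (Real.rpow_nonneg (by linarith [hx.2]) _)

lemma betaR_sq_le (y : ℝ) (hy : 0 ≤ y) :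
    (∫ t in Set.Ioo (0:ℝ) 1, t ^ (y + 1/2 - 1) * (1 - t) ^ ((1:ℝ)/2 - 1)) ^ 2
      ≤ (∫ t in Set.Ioo (0:ℝ) 1, t ^ (y + 1/4 - 1) * (1 - t) ^ ((1:ℝ)/2 - 1))
        * (∫ t in Set.Ioo (0:ℝ) 1, t ^ (y + 3/4 - 1) * (1 - t) ^ ((1:ℝ)/2 - 1)) := by
  set μ := volume.restrict (Set.Ioo (0:ℝ) 1) with hμ
  set u : ℝ → ℝ := fun t => t ^ ((y - 3/4)/2) * (1 - t) ^ (-(1/4) : ℝ) with hu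
  set v : ℝ → ℝ := fun t => t ^ ((y - 1/4)/2) * (1 - t) ^ (-(1/4) : ℝ) with hv
  have humeas : AEStronglyMeasurable u μ := by
    apply Measurable.aestronglyMeasurable
    fun_prop
  have hvmeas : AEStronglyMeasurable v μ := by
    apply Measurable.aestronglyMeasurable
    fun_prop
  have husq : ∀ x ∈ Set.Ioo (0:ℝ) 1, u x ^ 2 = x ^ (y + 1/4 - 1) * (1 - x) ^ ((1:ℝ)/2 - 1) := by
    intro x hx
    rw [hu]
    rw [mul_pow, ← Real.rpow_natCast (x ^ ((y - 3/4)/2)) 2,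
      ← Real.rpow_natCast ((1-x) ^ (-(1/4):ℝ)) 2,
      ← Real.rpow_mul hx.1.le, ← Real.rpow_mul (by linarith [hx.2])]
    norm_num
    exact Or.inl (by ring_nf)
  have hvsq : ∀ x ∈ Set.Ioo (0:ℝ) 1, v x ^ 2 = x ^ (y + 3/4 - 1) * (1 - x) ^ ((1:ℝ)/2 - 1) := by
    intro x hx
    rw [hv]
    rw [mul_pow, ← Real.rpow_natCast (x ^ ((y - 1/4)/2)) 2,
      ← Real.rpow_natCast ((1-x) ^ (-(1/4):ℝ)) 2,
      ← Real.rpow_mul hx.1.le, ← Real.rpow_mul (by linarith [hx.2])]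
    norm_num
    exact Or.inl (by ring_nf)
  have huv : ∀ x ∈ Set.Ioo (0:ℝ) 1, u x * v x = x ^ (y + 1/2 - 1) * (1 - x) ^ ((1:ℝ)/2 - 1) := by
    intro x hx
    rw [hu, hv, mul_mul_mul_comm, ← Real.rpow_add hx.1, ← Real.rpow_add (by linarith [hx.2])]
    norm_num
    exact Or.inl (by ring_nf)
  have hmemu : MemLp u (ENNReal.ofReal 2) μ := by
    rw [show ENNReal.ofReal 2 = 2 by norm_num]
    rw [memLp_two_iff_integrable_sq humeas]
    exact (betaR_integrableOn (a := y + 1/4) (b := 1/2) (by linarith) (by norm_num)).congr_fun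
      (fun x hx => (husq x hx).symm) measurableSet_Ioo
  have hmemv : MemLp v (ENNReal.ofReal 2) μ := by
    rw [show ENNReal.ofReal 2 = 2 by norm_num]
    rw [memLp_two_iff_integrable_sq hvmeas]
    exact (betaR_integrableOn (a := y + 3/4) (b := 1/2) (by linarith) (by norm_num)).congr_fun
      (fun x hx => (hvsq x hx).symm) measurableSet_Ioo
  have hpq : Real.HolderConjugate 2 2 := Real.HolderConjugate.two_two
  have hun : 0 ≤ᵐ[μ] u := (ae_restrict_iff' measurableSet_Ioo).mpr (Filter.Eventually.of_forall
    (fun x hx => mul_nonneg (Real.rpow_nonneg hx.1.le _) (Real.rpow_nonneg (by linarith [hx.2]) _)))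
  have hvn : 0 ≤ᵐ[μ] v := (ae_restrict_iff' measurableSet_Ioo).mpr (Filter.Eventually.of_forall
    (fun x hx => mul_nonneg (Real.rpow_nonneg hx.1.le _) (Real.rpow_nonneg (by linarith [hx.2]) _)))
  have hH := MeasureTheory.integral_mul_le_Lp_mul_Lq_of_nonneg hpq hun hvn hmemu hmemv
  have e1 : ∫ x, u x * v x ∂μ = ∫ t in Set.Ioo (0:ℝ) 1, t ^ (y + 1/2 - 1) * (1 - t) ^ ((1:ℝ)/2 - 1) :=
    setIntegral_congr_fun measurableSet_Ioo huv
  have e2 : ∫ x, u x ^ (2:ℝ) ∂μ = ∫ t in Set.Ioo (0:ℝ) 1, t ^ (y + 1/4 - 1) * (1 - t) ^ ((1:ℝ)/2 - 1) := by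
    refine setIntegral_congr_fun measurableSet_Ioo (fun x hx => ?_)
    rw [show u x ^ (2:ℝ) = u x ^ (2:ℕ) by
      rw [← Real.rpow_natCast (u x) 2]; norm_num]
    exact husq x hx
  have e3 : ∫ x, v x ^ (2:ℝ) ∂μ = ∫ t in Set.Ioo (0:ℝ) 1, t ^ (y + 3/4 - 1) * (1 - t) ^ ((1:ℝ)/2 - 1) := by
    refine setIntegral_congr_fun measurableSet_Ioo (fun x hx => ?_)
    rw [show v x ^ (2:ℝ) = v x ^ (2:ℕ) by
      rw [← Real.rpow_natCast (v x) 2]; norm_num]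
    exact hvsq x hx
  rw [e1, e2, e3] at hH
  set A := ∫ t in Set.Ioo (0:ℝ) 1, t ^ (y + 1/2 - 1) * (1 - t) ^ ((1:ℝ)/2 - 1)
  set B := ∫ t in Set.Ioo (0:ℝ) 1, t ^ (y + 1/4 - 1) * (1 - t) ^ ((1:ℝ)/2 - 1)
  set C := ∫ t in Set.Ioo (0:ℝ) 1, t ^ (y + 3/4 - 1) * (1 - t) ^ ((1:ℝ)/2 - 1)
  have hB : 0 ≤ B := betaR_nonneg _ _
  have hC : 0 ≤ C := betaR_nonneg _ _
  have hA : 0 ≤ A := betaR_nonneg _ _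
  calc A ^ 2 ≤ (B ^ ((1:ℝ)/2) * C ^ ((1:ℝ)/2)) ^ 2 := by
        apply pow_le_pow_left₀ hA hH
      _ = B * C := by
        rw [mul_pow, ← Real.rpow_natCast (B ^ ((1:ℝ)/2)) 2, ← Real.rpow_natCast (C ^ ((1:ℝ)/2)) 2,
          ← Real.rpow_mul hB, ← Real.rpow_mul hC]
        norm_num
end


lemma gamma_key (y : ℝ) (hy : 0 ≤ y) :
    Real.Gamma (y + 1/2) ^ 2 * (y + 1/4) ≤ Real.Gamma (y + 1) ^ 2 := by
  have g14 := Real.Gamma_pos_of_pos (by linarith : (0:ℝ) < y + 1/4)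
  have g12 := Real.Gamma_pos_of_pos (by linarith : (0:ℝ) < y + 1/2)
  have g34 := Real.Gamma_pos_of_pos (by linarith : (0:ℝ) < y + 3/4)
  have g1 := Real.Gamma_pos_of_pos (by linarith : (0:ℝ) < y + 1)
  have gh := Real.Gamma_pos_of_pos (by norm_num : (0:ℝ) < 1/2)
  have h1 := Gamma_mul_Gamma_eq_betaR (a := y + 1/2) (b := 1/2) (by linarith) (by norm_num)
  have h2 := Gamma_mul_Gamma_eq_betaR (a := y + 1/4) (b := 1/2) (by linarith) (by norm_num)
  have h3 := Gamma_mul_Gamma_eq_betaR (a := y + 3/4) (b := 1/2) (by linarith) (by norm_num)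
  rw [show y + 1/2 + 1/2 = y + 1 by ring] at h1
  rw [show y + 1/4 + 1/2 = y + 3/4 by ring] at h2
  rw [show y + 3/4 + 1/2 = y + 5/4 by ring] at h3
  have h4 := betaR_sq_le y hy
  have h5 : Real.Gamma (y + 5/4) = (y + 1/4) * Real.Gamma (y + 1/4) := by
    rw [show y + 5/4 = (y + 1/4) + 1 by ring, Real.Gamma_add_one (by positivity)]
  rw [h5] at h3
  have e1 : (∫ t in Set.Ioo (0:ℝ) 1, t ^ (y + 1/2 - 1) * (1 - t) ^ ((1:ℝ)/2 - 1))
      = Real.Gamma (y + 1/2) * Real.Gamma (1/2) / Real.Gamma (y + 1) := by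
    rw [eq_div_iff g1.ne']; linarith [h1]
  have e2 : (∫ t in Set.Ioo (0:ℝ) 1, t ^ (y + 1/4 - 1) * (1 - t) ^ ((1:ℝ)/2 - 1))
      = Real.Gamma (y + 1/4) * Real.Gamma (1/2) / Real.Gamma (y + 3/4) := by
    rw [eq_div_iff g34.ne']; linarith [h2]
  have e3 : (∫ t in Set.Ioo (0:ℝ) 1, t ^ (y + 3/4 - 1) * (1 - t) ^ ((1:ℝ)/2 - 1))
      = Real.Gamma (y + 3/4) * Real.Gamma (1/2) / ((y + 1/4) * Real.Gamma (y + 1/4)) := by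
    rw [eq_div_iff (by positivity)]; linarith [h3]
  rw [e1, e2, e3, div_pow, div_mul_div_comm,
    div_le_div_iff₀ (by positivity) (by positivity)] at h4
  have hcancel : 0 < Real.Gamma (1/2) ^ 2 * Real.Gamma (y + 3/4) * Real.Gamma (y + 1/4) := by
    positivity
  rw [← mul_le_mul_iff_of_pos_right hcancel]
  nlinarith [h4, sq_nonneg (Real.Gamma (1/2)), mul_pos g34 g14]

lemma gamma_key_strict (y : ℝ) (hy : 0 ≤ y) :
    Real.Gamma (y + 1/2) ^ 2 * (y + 1/4) < Real.Gamma (y + 1) ^ 2 := by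
  have g12 := Real.Gamma_pos_of_pos (by linarith : (0:ℝ) < y + 1/2)
  have g1 := Real.Gamma_pos_of_pos (by linarith : (0:ℝ) < y + 1)
  have h := gamma_key (y + 1) (by linarith)
  rw [show y + 1 + 1/2 = (y + 1/2) + 1 by ring, show y + 1 + 1 = (y + 1) + 1 by ring] at h
  rw [Real.Gamma_add_one (by positivity : y + 1/2 ≠ 0),
    Real.Gamma_add_one (by positivity : y + 1 ≠ 0)] at h
  have hpoly : (y+1)^2*(y+1/4) < (y+1/2)^2*(y+1+1/4) := by nlinarith
  have h2 : (y+1)^2*(y+1/4)*(Real.Gamma (y+1/2)^2)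
      < (y+1/2)^2*(y+1+1/4)*(Real.Gamma (y+1/2)^2) :=
    mul_lt_mul_of_pos_right hpoly (by positivity)
  have h3 : (y+1)^2 * (Real.Gamma (y+1/2)^2*(y+1/4)) < (y+1)^2 * Real.Gamma (y+1)^2 := by
    nlinarith [h2, h]
  exact lt_of_mul_lt_mul_left h3 (by positivity)

theorem gamma_ratio_ineq (x : ℝ) (hx : 0 ≤ x) :
    Real.Gamma (x + 1) / (Real.Gamma (x / 2 + 1)) ^ 2
      < (2 : ℝ) ^ (x + 1 / 2) / Real.sqrt (Real.pi * (x + 1 / 2)) := by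
  have h2s : (0:ℝ) < x + 1/2 := by linarith
  have hΓ1 : 0 < Real.Gamma (x/2 + 1) := Real.Gamma_pos_of_pos (by linarith)
  have hΓ12 : 0 < Real.Gamma (x/2 + 1/2) := Real.Gamma_pos_of_pos (by linarith)
  have hΓx1 : 0 < Real.Gamma (x + 1) := Real.Gamma_pos_of_pos (by linarith)
  have hs : 0 < Real.sqrt (π * (x + 1/2)) := Real.sqrt_pos.mpr (by positivity)
  have hsp : 0 < Real.sqrt π := Real.sqrt_pos.mpr pi_pos
  have h2x : 0 < (2:ℝ) ^ x := Real.rpow_pos_of_pos two_pos x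
  -- duplication formula
  have hdup := Real.Gamma_mul_Gamma_add_half (x/2 + 1/2)
  rw [show x/2 + 1/2 + 1/2 = x/2 + 1 by ring, show 2*(x/2 + 1/2) = x + 1 by ring] at hdup
  have hinv : (2:ℝ) ^ (1 - (x+1)) * (2:ℝ) ^ x = 1 := by
    rw [← Real.rpow_add two_pos]; norm_num
  have e_dup : Real.Gamma (x/2+1/2) * Real.Gamma (x/2+1) * (2:ℝ)^x
      = Real.Gamma (x+1) * Real.sqrt π := by
    linear_combination (2:ℝ)^x * hdup + Real.Gamma (x+1) * Real.sqrt π * hinv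
  -- key inequality
  have hkey := gamma_key_strict (x/2) (by linarith)
  have key2 : Real.Gamma (x/2+1/2) * Real.sqrt (x + 1/2) < Real.sqrt 2 * Real.Gamma (x/2+1) := by
    apply lt_of_pow_lt_pow_left₀ 2 (by positivity)
    rw [mul_pow, mul_pow, Real.sq_sqrt h2s.le, Real.sq_sqrt (by norm_num : (0:ℝ) ≤ 2)]
    nlinarith [hkey]
  rw [div_lt_div_iff₀ (by positivity) hs]
  rw [Real.sqrt_mul pi_pos.le, Real.rpow_add two_pos,
    show (2:ℝ) ^ ((1:ℝ)/2) = Real.sqrt 2 by rw [Real.sqrt_eq_rpow]]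
  calc Real.Gamma (x+1) * (Real.sqrt π * Real.sqrt (x+1/2))
      = Real.Gamma (x/2+1/2) * Real.Gamma (x/2+1) * (2:ℝ)^x * Real.sqrt (x+1/2) := by
        rw [e_dup]; ring
    _ = (Real.Gamma (x/2+1/2) * Real.sqrt (x+1/2)) * Real.Gamma (x/2+1) * (2:ℝ)^x := by ring
    _ < (Real.sqrt 2 * Real.Gamma (x/2+1)) * Real.Gamma (x/2+1) * (2:ℝ)^x := by
        apply mul_lt_mul_of_pos_right (mul_lt_mul_of_pos_right key2 hΓ1) h2x
    _ = (2:ℝ)^x * Real.sqrt 2 * Real.Gamma (x/2+1)^2 := by ring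
end

section
/- Let α ≥ β > 1/2 and set B₁(x) = (2k+α+β+1)^2 (1-x^2) - 2(1+x)α^2 - 2(1-x)β^2 + 1 for k a positive integer. Then B₁(-1) ≤ 0, B₁(1) ≤ 0, and B₁((β-α)/(α+β+1)) > 0; consequently B₁ has exactly two zeros in [-1,1]. -/
/-!
`B₁` is a concave quadratic, since its leading coefficient is `-(2k+α+β+1)²`. At the endpoints
it takes the values `1 - 4β²` and `1 - 4α²`, which are negative. At `m = (β-α)/(α+β+1)`, multiplying
by `T² = (α+β+1)²` gives `((2k+T)² - T² + 2T)(2α+1)(2β+1) > 0`. A concave quadratic that is positive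
at some `m ∈ [-1, 1]` factors as `a (x - r₁)(x - r₂)` with `a < 0` and `r₁ < m < r₂`, and it is
positive exactly on `(r₁, r₂)`. So the endpoint signs force `-1 ≤ r₁` and `r₂ ≤ 1`.
-/

open Set

section ConcaveQuadratic

variable {a b c : ℝ}

theorem exists_roots_around_of_quadratic_pos (ha : a < 0) {m : ℝ}
    (hm : 0 < a * m ^ 2 + b * m + c) :
    ∃ r₁ r₂, r₁ < m ∧ m < r₂ ∧ ∀ x, a * x ^ 2 + b * x + c = a * (x - r₁) * (x - r₂) := by
  have hd : 0 < discrim a b c := by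
    have : discrim a b c = (2 * a * m + b) ^ 2 - 4 * a * (a * m ^ 2 + b * m + c) := by
      rw [discrim]; ring
    nlinarith [sq_nonneg (2 * a * m + b)]
  set s := √(discrim a b c)
  have hs : s ^ 2 = discrim a b c := Real.sq_sqrt hd.le
  have hs0 : 0 < s := Real.sqrt_pos.2 hd
  set r₁ := (-b + s) / (2 * a)
  set r₂ := (-b - s) / (2 * a)
  have hfac : ∀ x, a * x ^ 2 + b * x + c = a * (x - r₁) * (x - r₂) := by
    intro x
    have ha' := ha.ne
    simp only [r₁, r₂]
    field_simp
    rw [discrim] at hs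
    linear_combination hs
  have hr : r₁ < r₂ := div_lt_div_of_neg_of_lt (by linarith) (by linarith)
  have hneg : (m - r₁) * (m - r₂) < 0 := by
    rw [hfac, mul_assoc] at hm
    exact neg_of_mul_pos_right hm ha.le
  refine ⟨r₁, r₂, ?_, ?_, hfac⟩ <;> nlinarith

theorem ncard_zeros_Icc_eq_two_of_quadratic {f : ℝ → ℝ} (hf : ∀ x, f x = a * x ^ 2 + b * x + c)
    (ha : a < 0) {p q m : ℝ} (hm : m ∈ Icc p q) (hp : f p ≤ 0) (hq : f q ≤ 0)
    (hfm : 0 < f m) : {x ∈ Icc p q | f x = 0}.ncard = 2 := by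
  rw [hf] at hfm
  obtain ⟨r₁, r₂, hr₁, hr₂, hfac⟩ := exists_roots_around_of_quadratic_pos ha hfm
  simp only [hf, hfac] at hp hq ⊢
  have hpr : p ≤ r₁ := by
    by_contra! h
    nlinarith [mul_pos (sub_pos.2 h) (sub_pos.2 (hm.1.trans_lt hr₂))]
  have hrq : r₂ ≤ q := by
    by_contra! h
    nlinarith [mul_pos (sub_pos.2 (hr₁.trans_le hm.2)) (sub_pos.2 h)]
  have hzeros : {x ∈ Icc p q | a * (x - r₁) * (x - r₂) = 0} = {r₁, r₂} := by
    ext x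
    simp only [mem_Icc, mem_insert_iff, mem_singleton_iff, mul_eq_zero, ha.ne,
      false_or, sub_eq_zero]
    constructor
    · exact fun h => h.2
    · rintro (rfl | rfl)
      · exact ⟨⟨hpr, by linarith⟩, .inl rfl⟩
      · exact ⟨⟨by linarith, hrq⟩, .inr rfl⟩
  rw [hzeros, ncard_pair (hr₁.trans hr₂).ne]

end ConcaveQuadratic

def B1 (k α β x : ℝ) : ℝ :=
  (2 * k + α + β + 1) ^ 2 * (1 - x ^ 2) - 2 * (1 + x) * α ^ 2 - 2 * (1 - x) * β ^ 2 + 1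

theorem B1_eq_quadratic (k α β x : ℝ) :
    B1 k α β x = -(2 * k + α + β + 1) ^ 2 * x ^ 2 + 2 * (β ^ 2 - α ^ 2) * x
      + ((2 * k + α + β + 1) ^ 2 - 2 * α ^ 2 - 2 * β ^ 2 + 1) := by
  rw [B1]; ring

theorem B1_neg_one (k α β : ℝ) : B1 k α β (-1) = 1 - 4 * β ^ 2 := by
  rw [B1]; ring

theorem B1_one (k α β : ℝ) : B1 k α β 1 = 1 - 4 * α ^ 2 := by
  rw [B1]; ring

theorem B1_pos {k α β : ℝ} (hk : 0 ≤ k) (hα : -1 / 2 < α) (hβ : -1 / 2 < β) :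
    0 < B1 k α β ((β - α) / (α + β + 1)) := by
  set T := α + β + 1
  have hT : 0 < T := by linarith
  have huv : 0 < (2 * α + 1) * (2 * β + 1) := by apply mul_pos <;> linarith
  have hST : T ^ 2 ≤ (2 * k + T) ^ 2 := by gcongr; linarith
  have key : B1 k α β ((β - α) / T) * T ^ 2 =
      ((2 * k + T) ^ 2 - T ^ 2) * ((2 * α + 1) * (2 * β + 1))
        + 2 * T * ((2 * α + 1) * (2 * β + 1)) := by
    rw [B1]; field_simp; ring
  refine pos_of_mul_pos_left ?_ (sq_nonneg T)
  rw [key]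
  nlinarith

theorem B1_two_zeros_general (k : ℕ) (α β : ℝ)
    (hβ : 1 / 2 < β) (hαβ : β ≤ α)
    (B₁ : ℝ → ℝ)
    (hB₁ : ∀ x, B₁ x = (2 * k + α + β + 1) ^ 2 * (1 - x ^ 2)
        - 2 * (1 + x) * α ^ 2 - 2 * (1 - x) * β ^ 2 + 1) :
    B₁ (-1) ≤ 0 ∧ B₁ 1 ≤ 0 ∧ 0 < B₁ ((β - α) / (α + β + 1)) ∧
      ({x ∈ Set.Icc (-1 : ℝ) 1 | B₁ x = 0}).ncard = 2 := by
  obtain rfl : B₁ = B1 k α β := funext hB₁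
  have hα : 1 / 2 < α := hβ.trans_le hαβ
  have hT : 0 < α + β + 1 := by linarith
  have hneg_one : B1 k α β (-1) ≤ 0 := by rw [B1_neg_one]; nlinarith
  have hone : B1 k α β 1 ≤ 0 := by rw [B1_one]; nlinarith
  have hm : 0 < B1 k α β ((β - α) / (α + β + 1)) :=
    B1_pos k.cast_nonneg (by linarith) (by linarith)
  have hm_mem : (β - α) / (α + β + 1) ∈ Icc (-1) 1 :=
    ⟨by rw [le_div_iff₀ hT]; linarith, by rw [div_le_one hT]; linarith⟩
  exact ⟨hneg_one, hone, hm, ncard_zeros_Icc_eq_two_of_quadratic (B1_eq_quadratic k α β)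
    (neg_neg_of_pos (by positivity)) hm_mem hneg_one hone hm⟩

theorem B1_two_zeros (k : ℕ) (hk : 1 ≤ k) (α β : ℝ)
    (hβ : 1 / 2 < β) (hαβ : β ≤ α)
    (B₁ : ℝ → ℝ)
    (hB₁ : ∀ x, B₁ x = (2 * k + α + β + 1) ^ 2 * (1 - x ^ 2)
        - 2 * (1 + x) * α ^ 2 - 2 * (1 - x) * β ^ 2 + 1) :
    B₁ (-1) ≤ 0 ∧ B₁ 1 ≤ 0 ∧ 0 < B₁ ((β - α) / (α + β + 1)) ∧
      ({x ∈ Set.Icc (-1 : ℝ) 1 | B₁ x = 0}).ncard = 2 :=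
  B1_two_zeros_general k α β hβ hαβ B₁ hB₁
end

section
/- Let α ≥ β > 1/2 with α ≠ β and define D(x) = (α^2 - β^2)(x^2 + 1) + (2α^2 + 2β^2 - 1)x. Then D(-1) = 1 - 4β^2 < 0 and D(1) = 4α^2 - 1 > 0, and D has exactly one zero in (-1, 1), namely x₀ = (√(4β^2-1) - √(4α^2-1)) / (√(4β^2-1) + √(4α^2-1)). -/
theorem D_unique_zero (α β : ℝ) (hβ : 1 / 2 < β) (hαβ : β ≤ α) (hne : α ≠ β)
    (D : ℝ → ℝ)
    (hD : ∀ x, D x = (α ^ 2 - β ^ 2) * (x ^ 2 + 1) + (2 * α ^ 2 + 2 * β ^ 2 - 1) * x) :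
    D (-1) = 1 - 4 * β ^ 2 ∧ D (-1) < 0 ∧
    D 1 = 4 * α ^ 2 - 1 ∧ 0 < D 1 ∧
    (∀ x ∈ Set.Ioo (-1 : ℝ) 1,
      (D x = 0 ↔ x = (Real.sqrt (4 * β ^ 2 - 1) - Real.sqrt (4 * α ^ 2 - 1)) /
        (Real.sqrt (4 * β ^ 2 - 1) + Real.sqrt (4 * α ^ 2 - 1)))) := by
  have hα : 1 / 2 < α := lt_of_lt_of_le hβ hαβ
  have hβα : β < α := lt_of_le_of_ne hαβ (Ne.symm hne)
  set u := Real.sqrt (4 * β ^ 2 - 1) with hu_def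
  set v := Real.sqrt (4 * α ^ 2 - 1) with hv_def
  have hb0 : (0:ℝ) ≤ 4 * β ^ 2 - 1 := by nlinarith
  have hu2 : u ^ 2 = 4 * β ^ 2 - 1 := Real.sq_sqrt hb0
  have hv2 : v ^ 2 = 4 * α ^ 2 - 1 := Real.sq_sqrt (by nlinarith)
  have hu : 0 < u := Real.sqrt_pos.2 (by nlinarith)
  have hv : 0 < v := Real.sqrt_pos.2 (by nlinarith)
  have huv : u < v := by
    apply Real.sqrt_lt_sqrt hb0
    nlinarith
  refine ⟨by rw [hD]; ring, by rw [hD]; nlinarith, by rw [hD]; ring,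
    by rw [hD]; nlinarith, ?_⟩
  intro x hx
  obtain ⟨hx1, hx2⟩ := hx
  have hfac : 4 * D x = ((u + v) * x + (v - u)) * ((v - u) * x + (u + v)) := by
    rw [hD x]
    linear_combination (-(x ^ 2) - 1 - 2 * x) * hv2 + (x ^ 2 + 1 - 2 * x) * hu2
  have h2 : 0 < (v - u) * x + (u + v) := by
    nlinarith [mul_pos (sub_pos.2 huv) (by linarith : (0:ℝ) < x + 1)]
  have hsum : (0:ℝ) < u + v := by linarith
  constructor
  · intro h0
    have hz : ((u + v) * x + (v - u)) * ((v - u) * x + (u + v)) = 0 := by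
      rw [← hfac, h0]; ring
    have h1 := (mul_eq_zero.1 hz).resolve_right (ne_of_gt h2)
    rw [eq_div_iff (ne_of_gt hsum)]
    linarith
  · intro hx0
    have h4 : 4 * D x = 0 := by
      rw [hfac, hx0]
      field_simp
      ring
    linarith
end

section
/- For integer k ≥ 6 and real α ≥ (1+√2)/4, setting r = 2k+2α+1 and tan τ = (2α+1)/√(r^2-(2α+1)^2) (i.e. sin τ = (2α+1)/r with 0 ≤ τ < π/2), the quantity ε = (2^{-1/3}/3) r^{-2/3} tan^{4/3} τ satisfies ε < 1/31. -/
theorem epsilon_bound (k : ℕ) (hk : 6 ≤ k) (α : ℝ)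
    (hα : (1 + Real.sqrt 2) / 4 ≤ α)
    (r : ℝ) (hr : r = 2 * k + 2 * α + 1)
    (τ : ℝ) (hτ0 : 0 ≤ τ) (hτ1 : τ < Real.pi / 2)
    (hsin : Real.sin τ = (2 * α + 1) / r)
    (ε : ℝ)
    (hε : ε = (2 : ℝ) ^ (-(1 : ℝ) / 3) / 3 * r ^ (-(2 : ℝ) / 3) *
        Real.tan τ ^ ((4 : ℝ) / 3)) :
    ε < 1 / 31 := by
  set t : ℝ := 2 * α + 1 with ht
  clear_value t
  have hk6 : (6 : ℝ) ≤ (k : ℝ) := by exact_mod_cast hk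
  have hα0 : (0 : ℝ) ≤ α := le_trans (by positivity) hα
  have ht1 : (1 : ℝ) ≤ t := by simp [ht]; linarith
  have ht0 : (0 : ℝ) < t := by linarith
  have hrt : t < r := by rw [hr]; linarith
  have hr0 : (0 : ℝ) < r := by linarith
  have hcos : 0 < Real.cos τ :=
    Real.cos_pos_of_mem_Ioo ⟨by linarith [Real.pi_pos], hτ1⟩
  have hsin0 : 0 < Real.sin τ := by rw [hsin]; positivity
  have htan0 : 0 ≤ Real.tan τ := by
    rw [Real.tan_eq_sin_div_cos]; positivity
  have hc2 : Real.cos τ ^ 2 = (r ^ 2 - t ^ 2) / r ^ 2 := by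
    have := Real.sin_sq_add_cos_sq τ
    rw [hsin] at this
    field_simp at this ⊢
    linarith
  have hrt2 : 0 < r ^ 2 - t ^ 2 := by nlinarith
  have htan4 : Real.tan τ ^ 4 = t ^ 4 / (r ^ 2 - t ^ 2) ^ 2 := by
    have hs4 : Real.sin τ ^ 4 = t ^ 4 / r ^ 4 := by rw [hsin]; ring
    have hc4 : Real.cos τ ^ 4 = (r ^ 2 - t ^ 2) ^ 2 / r ^ 4 := by
      have : Real.cos τ ^ 4 = (Real.cos τ ^ 2) ^ 2 := by ring
      rw [this, hc2]; field_simp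
    rw [Real.tan_eq_sin_div_cos, div_pow, hs4, hc4]
    field_simp
  -- compute ε ^ 3
  have h2 : ((2 : ℝ) ^ (-(1 : ℝ) / 3)) ^ (3 : ℕ) = 1 / 2 := by
    rw [← Real.rpow_natCast ((2 : ℝ) ^ (-(1 : ℝ) / 3)) 3,
      ← Real.rpow_mul (by norm_num : (0:ℝ) ≤ 2)]
    norm_num
  have hrp : ((r : ℝ) ^ (-(2 : ℝ) / 3)) ^ (3 : ℕ) = (r ^ 2)⁻¹ := by
    rw [← Real.rpow_natCast (r ^ (-(2 : ℝ) / 3)) 3,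
      ← Real.rpow_mul hr0.le]
    norm_num
  have htp : ((Real.tan τ) ^ ((4 : ℝ) / 3)) ^ (3 : ℕ) = Real.tan τ ^ 4 := by
    rw [← Real.rpow_natCast (Real.tan τ ^ ((4 : ℝ) / 3)) 3,
      ← Real.rpow_mul htan0]
    norm_num
  have hε3 : ε ^ 3 = t ^ 4 / (54 * r ^ 2 * (r ^ 2 - t ^ 2) ^ 2) := by
    rw [hε]
    have : ((2 : ℝ) ^ (-(1 : ℝ) / 3) / 3 * r ^ (-(2 : ℝ) / 3) *
        Real.tan τ ^ ((4 : ℝ) / 3)) ^ (3:ℕ) =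
        ((2 : ℝ) ^ (-(1 : ℝ) / 3)) ^ (3:ℕ) / 27 * (r ^ (-(2 : ℝ) / 3)) ^ (3:ℕ) *
        (Real.tan τ ^ ((4 : ℝ) / 3)) ^ (3:ℕ) := by ring
    rw [this, h2, hrp, htp, htan4]
    field_simp
    norm_num
  have hrsub : r ^ 2 - t ^ 2 = 4 * k * (k + t) := by
    rw [hr, ht]; ring
  have hr2 : r = 2 * k + t := by rw [hr, ht]; ring
  have key : ε ^ 3 < (1 / 31) ^ 3 := by
    rw [hε3, hrsub, hr2]
    rw [div_lt_iff₀ (by positivity)]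
    have hkpos : (0:ℝ) < (k:ℝ) := by linarith
    have ha : t ^ 2 < (2 * (k:ℝ) + t) * ((k:ℝ) + t) := by
      nlinarith [mul_pos hkpos ht0, mul_pos hkpos hkpos]
    have ha2 : t ^ 2 * t ^ 2 < ((2 * (k:ℝ) + t) * ((k:ℝ) + t)) *
        ((2 * (k:ℝ) + t) * ((k:ℝ) + t)) :=
      mul_self_lt_mul_self (by positivity) ha
    have hk2 : (36 : ℝ) ≤ (k : ℝ) ^ 2 := by
      calc (36:ℝ) = 6 * 6 := by norm_num
        _ ≤ (k:ℝ) * (k:ℝ) := mul_le_mul hk6 hk6 (by norm_num) (by linarith)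
        _ = (k:ℝ) ^ 2 := by ring
    have hb : (36:ℝ) * (t^2)^2 < (k:ℝ)^2 * ((2*(k:ℝ)+t)*((k:ℝ)+t))^2 :=
      calc (36:ℝ) * (t^2)^2 < 36 * ((2*(k:ℝ)+t)*((k:ℝ)+t))^2 := by linarith [ha2]
        _ ≤ (k:ℝ)^2 * ((2*(k:ℝ)+t)*((k:ℝ)+t))^2 :=
            mul_le_mul_of_nonneg_right hk2 (sq_nonneg _)
    linarith [hb, pow_pos ht0 4]
  have hε0 : 0 ≤ ε := by
    rw [hε]; positivity
  exact lt_of_pow_lt_pow_left₀ 3 (by norm_num) key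
end
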